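/- arXiv:cs/0207065 — 2 statements merged into one kernel-verified Lean document; each statement's English description precedes it below -/
import Mathlib

section
/- Let ⟨Σ,Δ⟩ be a finite default theory and ⟨Ξ,A⟩ its associated argumentation system. Then there is a bijection between the accessible structures of ⟨Ξ,A⟩ and the consistent extensions of ⟨Σ,Δ⟩. -/
/-!
Both sides are parametrised by sets `D ⊆ Δ` of defaults. Under the translation, the term
`{a_δ^c : δ ∈ D}` is consistent with `Ξ` iff `S ∪ con(D)` is, and adding `a_δ^p` (resp.
`a_{δ,i}^j`) to it makes it inconsistent iff `pre(δ)` (resp. `¬β_i`) follows from `S ∪ con(D)`.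
Hence a generating sequence is an enumeration of a set `D` in which every prerequisite follows
from the consequences enumerated before it, `Th (S ∪ con(D))` is consistent, and `D` consists
exactly of the defaults of `Δ` applicable in `Th (S ∪ con(D))`. By Reiter's characterisation,
the consistent extensions are exactly the theories `Th (S ∪ con(D))` for these `D`; the
enumeration comes from ordering `D` by the stage at which each prerequisite is derived. Both
sides determine `D`: an accessible structure through its consequential assumptions, an
extension `E` as its set of generating defaults.
-/

/-! ## Classical propositional logic -/

/-- Propositional formulas over a set of variables `V`. -/
inductive PropForm (V : Type) : Type
  | var : V → PropForm V
  | verum : PropForm V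
  | falsum : PropForm V
  | neg : PropForm V → PropForm V
  | conj : PropForm V → PropForm V → PropForm V
  | disj : PropForm V → PropForm V → PropForm V
  | impl : PropForm V → PropForm V → PropForm V

namespace PropForm

/-- Truth-value of a formula under an assignment. -/
def eval {V : Type} (v : V → Bool) : PropForm V → Bool
  | var a => v a
  | verum => true
  | falsum => false
  | neg φ => !(eval v φ)
  | conj φ ψ => eval v φ && eval v ψ
  | disj φ ψ => eval v φ || eval v ψ
  | impl φ ψ => !(eval v φ) || eval v ψ

/-- Renaming/embedding of variables. -/
def map {V W : Type} (f : V → W) : PropForm V → PropForm W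
  | var a => var (f a)
  | verum => verum
  | falsum => falsum
  | neg φ => neg (map f φ)
  | conj φ ψ => conj (map f φ) (map f ψ)
  | disj φ ψ => disj (map f φ) (map f ψ)
  | impl φ ψ => impl (map f φ) (map f ψ)

/-- The set of variables occurring in a formula. -/
def vars {V : Type} : PropForm V → Set V
  | var a => {a}
  | verum => ∅
  | falsum => ∅
  | neg φ => vars φ
  | conj φ ψ => vars φ ∪ vars ψ
  | disj φ ψ => vars φ ∪ vars ψ
  | impl φ ψ => vars φ ∪ vars ψ

end PropForm

/-- An assignment satisfies a set of formulas. -/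
def Satisfies {V : Type} (v : V → Bool) (S : Set (PropForm V)) : Prop :=
  ∀ φ ∈ S, φ.eval v = true

/-- Satisfiability (= consistency, by classical completeness) of a set of formulas. -/
def Satisfiable {V : Type} (S : Set (PropForm V)) : Prop :=
  ∃ v, Satisfies v S

/-- `S ⊢ φ` (classical propositional derivability = semantic entailment). -/
def Entails {V : Type} (S : Set (PropForm V)) (φ : PropForm V) : Prop :=
  ∀ v, Satisfies v S → φ.eval v = true

/-- `Th S`: the deductive closure of `S`. -/
def Th {V : Type} (S : Set (PropForm V)) : Set (PropForm V) :=
  {φ | Entails S φ}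

/-! ## Default logic -/

/-- A default `pre : jus₁, …, jus_k / con`. -/
structure Default (P : Type) : Type where
  pre : PropForm P
  jus : List (PropForm P)
  con : PropForm P

/-- `E` is an extension of the default theory `⟨S, Δ⟩` (Reiter, via the
sequence characterization): there is a sequence `Es` with `Es 0 = S`,
`Es (j+1) = Th (Es j) ∪ con {δ ∈ Δ : pre δ ∈ Es j and ¬β ∉ E for each justification β}`
and `E = ⋃ j, Es j`. -/
def IsExtension {P : Type} (S : Set (PropForm P)) (Δ : Finset (Default P))
    (E : Set (PropForm P)) : Prop :=
  ∃ Es : ℕ → Set (PropForm P),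
    Es 0 = S ∧
    (∀ j, Es (j + 1) = Th (Es j) ∪
      {γ | ∃ δ ∈ Δ, γ = δ.con ∧ δ.pre ∈ Es j ∧ ∀ β ∈ δ.jus, PropForm.neg β ∉ E}) ∧
    E = ⋃ j, Es j

/-! ## The translation into an argumentation system -/

/-- Fresh assumption propositions: one prerequisitional assumption `a_δ^p`,
justificational assumptions `a_{δ,i}^j`, and one consequential assumption `a_δ^c`
for each default `δ`. -/
inductive ALabel (P : Type) : Type
  | pre : Default P → ALabel P
  | jus : Default P → ℕ → ALabel P
  | con : Default P → ALabel P

/-- The variables of the argumentation theory: the original propositions `P`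
together with the fresh assumptions. -/
abbrev VA (P : Type) : Type := P ⊕ ALabel P

/-- Embedding of formulas of `L_P` into the extended language. -/
def emb {P : Type} (φ : PropForm P) : PropForm (VA P) :=
  φ.map Sum.inl

/-- The assumption `a` as an atomic formula. -/
def avar {P : Type} (a : ALabel P) : PropForm (VA P) :=
  PropForm.var (Sum.inr a)

/-- The translation `t(δ) = {a_δ^p → ¬pre(δ)} ∪ {a_{δ,i}^j → β_i} ∪ {a_δ^c → con(δ)}`. -/
def transDefault {P : Type} (δ : Default P) : Set (PropForm (VA P)) :=
  {PropForm.impl (avar (ALabel.pre δ)) (PropForm.neg (emb δ.pre))} ∪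
  {φ | ∃ i : Fin δ.jus.length, φ = PropForm.impl (avar (ALabel.jus δ i)) (emb (δ.jus.get i))} ∪
  {PropForm.impl (avar (ALabel.con δ)) (emb δ.con)}

/-- `Ξ = Σ ∪ ⋃_{δ ∈ Δ} t(δ)`, the argumentation theory associated with `⟨S, Δ⟩`. -/
def Xi {P : Type} (S : Set (PropForm P)) (Δ : Finset (Default P)) :
    Set (PropForm (VA P)) :=
  (emb '' S) ∪ ⋃ δ ∈ Δ, transDefault δ

/-! ## Terms, inconsistency, structures -/

/-- A literal over the assumptions: an assumption together with a sign. -/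
structure ALit (P : Type) : Type where
  atom : ALabel P
  sign : Bool

/-- A term: a set of assumption literals with no complementary pair.
(The trivial term `{⊤}`, imposing no assumptions, is represented by `∅`.) -/
def IsTerm {P : Type} (α : Set (ALit P)) : Prop :=
  ∀ a : ALabel P, ¬ (ALit.mk a true ∈ α ∧ ALit.mk a false ∈ α)

/-- The literal `ℓ` as a formula. -/
def ALit.form {P : Type} (ℓ : ALit P) : PropForm (VA P) :=
  if ℓ.sign then avar ℓ.atom else PropForm.neg (avar ℓ.atom)

/-- A set of literals as a set of formulas. -/
def litForms {P : Type} (α : Set (ALit P)) : Set (PropForm (VA P)) :=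
  ALit.form '' α

/-- `α ∈ I(Ξ)`: the term `α` is inconsistent relative to `Ξ`,
i.e. `α ∪ Ξ` is unsatisfiable. -/
def InI {P : Type} (Ξ : Set (PropForm (VA P))) (α : Set (ALit P)) : Prop :=
  ¬ Satisfiable (Ξ ∪ litForms α)

/-- `μI(Ξ)`: the minimal contradictions, i.e. the inconsistent terms none of whose
proper subsets is inconsistent relative to `Ξ`. -/
def muI {P : Type} (Ξ : Set (PropForm (VA P))) : Set (Set (ALit P)) :=
  {α | IsTerm α ∧ InI Ξ α ∧ ∀ β, β ⊂ α → ¬ InI Ξ β}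

/-- `⟨α, 𝒜⟩` is a structure: `α` is a term consistent with `Ξ` and each single
literal of `𝒜` can be consistently added to `α`. -/
def IsStruct {P : Type} (Ξ : Set (PropForm (VA P))) (α 𝒜 : Set (ALit P)) : Prop :=
  IsTerm α ∧ ¬ InI Ξ α ∧ ∀ ℓ ∈ 𝒜, ¬ InI Ξ (insert ℓ α)

/-- The (positive) prerequisitional assumption literal `a_δ^p` of `δ`. -/
def preLit {P : Type} (δ : Default P) : ALit P := ⟨ALabel.pre δ, true⟩

/-- The (positive) justificational assumption literal `a_{δ,i}^j` of `δ`. -/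
def jusLit {P : Type} (δ : Default P) (i : ℕ) : ALit P := ⟨ALabel.jus δ i, true⟩

/-- The (positive) consequential assumption literal `a_δ^c` of `δ`. -/
def conLit {P : Type} (δ : Default P) : ALit P := ⟨ALabel.con δ, true⟩

/-- The set of justificational assumption literals of `δ`. -/
def jusLits {P : Type} (δ : Default P) : Set (ALit P) :=
  {ℓ | ∃ i : Fin δ.jus.length, ℓ = jusLit δ i}

/-- `α ⊆ A_c`: `α` is a consequential term (every literal of `α` is the positive
consequential assumption of some default of `Δ`). -/
def ConsTerm {P : Type} (Δ : Finset (Default P)) (α : Set (ALit P)) : Prop :=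
  ∀ ℓ ∈ α, ∃ δ ∈ Δ, ℓ = conLit δ

/-- The default assumption of `δ` is applicable w.r.t. the consequential term `α`:
`{a_δ^p} ∪ α ∈ I(Ξ)` and `{a_{δ,i}^j} ∪ α ∉ I(Ξ)` for every justification index `i`. -/
def Applicable {P : Type} (Ξ : Set (PropForm (VA P))) (δ : Default P)
    (α : Set (ALit P)) : Prop :=
  InI Ξ (insert (preLit δ) α) ∧
  ∀ i : Fin δ.jus.length, ¬ InI Ξ (insert (jusLit δ i) α)

/-! ## Accessible structures and default terms -/

/-- One application step of the map `a_δ^≺` in the applicable case: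
add `a_δ^c` to the anchor and the justificational assumptions of `δ`
to the set of irrelevant literals. -/
def stepPair {P : Type} (δ : Default P) (p : Set (ALit P) × Set (ALit P)) :
    Set (ALit P) × Set (ALit P) :=
  (insert (conLit δ) p.1, jusLits δ ∪ p.2)

/-- The CJ-pair obtained by successively applying the default assumptions of `L`
starting from `⟨{⊤}, ∅⟩` (the trivial term being represented by `∅`). -/
def runList {P : Type} (L : List (Default P)) : Set (ALit P) × Set (ALit P) :=
  L.foldl (fun p δ => stepPair δ p) (∅, ∅)

/-- Starting from the CJ-pair `p`, the defaults of the list can be applied one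
after the other: at each step the current pair is a structure and the next
default assumption is applicable w.r.t. the current anchor. -/
def ValidFrom {P : Type} (Ξ : Set (PropForm (VA P))) :
    Set (ALit P) × Set (ALit P) → List (Default P) → Prop
  | _, [] => True
  | p, δ :: L => IsStruct Ξ p.1 p.2 ∧ Applicable Ξ δ p.1 ∧ ValidFrom Ξ (stepPair δ p) L

/-- `L` is a generating sequence of the structure `⟨α, 𝒜⟩`: a sequence of pairwise
distinct default assumptions of `Δ`, applicable one after the other starting from
`⟨{⊤}, ∅⟩`, ending exactly in the structure `⟨α, 𝒜⟩`, and such that no default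
assumption of `Δ` applicable w.r.t. `α` is missing from the sequence. -/
def GenSeq {P : Type} (Ξ : Set (PropForm (VA P))) (Δ : Finset (Default P))
    (L : List (Default P)) (α 𝒜 : Set (ALit P)) : Prop :=
  L.Nodup ∧ (∀ δ ∈ L, δ ∈ Δ) ∧ ValidFrom Ξ (∅, ∅) L ∧ runList L = (α, 𝒜) ∧
  IsStruct Ξ α 𝒜 ∧ ∀ δ ∈ Δ, Applicable Ξ δ α → δ ∈ L

/-- The structure `⟨α, 𝒜⟩` is accessible (w.r.t. the default assumptions of `Δ`). -/
def Accessible {P : Type} (Ξ : Set (PropForm (VA P))) (Δ : Finset (Default P))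
    (α 𝒜 : Set (ALit P)) : Prop :=
  ∃ L : List (Default P), GenSeq Ξ Δ L α 𝒜

/-- `dt(Ξ)`: the default terms, i.e. the anchors of accessible structures. -/
def dt {P : Type} (Ξ : Set (PropForm (VA P))) (Δ : Finset (Default P)) :
    Set (Set (ALit P)) :=
  {α | ∃ 𝒜, Accessible Ξ Δ α 𝒜}

/-! ## Supporting arguments -/

/-- `sp(φ; Ξ)`: the supporting arguments for `φ`, i.e. the terms `α` with
`α, Ξ ⊢ φ` such that every term extending `α` is consistent with `Ξ`. -/
def sp {P : Type} (Ξ : Set (PropForm (VA P))) (φ : PropForm (VA P)) :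
    Set (Set (ALit P)) :=
  {α | IsTerm α ∧ Entails (Ξ ∪ litForms α) φ ∧
    ∀ α', IsTerm α' → α ⊆ α' → ¬ InI Ξ α'}

/-- `α⁺ = α ∩ A`: the positive literals of the term `α`. -/
def posPart {P : Type} (α : Set (ALit P)) : Set (ALit P) :=
  {ℓ ∈ α | ℓ.sign = true}

open PropForm

section Logic

variable {V : Type}

theorem PropForm.eval_map {W : Type} (f : V → W) (v : W → Bool) (φ : PropForm V) :
    (φ.map f).eval v = φ.eval (v ∘ f) := by
  induction φ <;> simp [map, eval, *]

theorem subset_Th (T : Set (PropForm V)) : T ⊆ Th T :=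
  fun φ hφ _ hv => hv φ hφ

theorem Th_mono {T T' : Set (PropForm V)} (h : T ⊆ T') : Th T ⊆ Th T' :=
  fun _ hφ v hv => hφ v fun ψ hψ => hv ψ (h hψ)

theorem Th_subset_Th_of_subset_Th {T T' : Set (PropForm V)} (h : T ⊆ Th T') : Th T ⊆ Th T' :=
  fun _ hφ v hv => hφ v fun _ hψ => h hψ v hv

theorem Th_Th (T : Set (PropForm V)) : Th (Th T) = Th T :=
  (Th_subset_Th_of_subset_Th subset_rfl).antisymm (subset_Th _)

theorem falsum_mem_Th_iff {T : Set (PropForm V)} : falsum ∈ Th T ↔ ¬ Satisfiable T := by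
  simp [Th, Entails, Satisfiable, eval]

theorem mem_Th_iff {T : Set (PropForm V)} {φ : PropForm V} :
    φ ∈ Th T ↔ ¬ Satisfiable (insert (neg φ) T) := by
  simp only [Th, Entails, Satisfiable, Satisfies, Set.mem_ofPred_eq, Set.forall_mem_insert,
    not_exists]
  refine forall_congr' fun v => ?_
  cases h : eval v φ <;> simp [eval, h]

theorem neg_mem_Th_iff {T : Set (PropForm V)} {φ : PropForm V} :
    neg φ ∈ Th T ↔ ¬ Satisfiable (insert φ T) := by
  simp only [Th, Entails, Satisfiable, Satisfies, Set.mem_ofPred_eq, Set.forall_mem_insert,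
    not_exists]
  refine forall_congr' fun v => ?_
  cases h : eval v φ <;> simp [eval, h]

end Logic

variable {P : Type}

def ALabel.default : ALabel P → Default P
  | .pre δ => δ
  | .jus δ _ => δ
  | .con δ => δ

/-- What the axiom of `t(δ)` for this assumption asserts once the assumption holds (`verum` for a
justification index out of range, which no axiom mentions). -/
def ALabel.meaning : ALabel P → PropForm P
  | .pre δ => neg δ.pre
  | .jus δ i => δ.jus.getD i verum
  | .con δ => δ.con

theorem eval_emb (v : VA P → Bool) (φ : PropForm P) : (emb φ).eval v = φ.eval (v ∘ Sum.inl) :=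
  eval_map _ _ _

theorem satisfies_transDefault_iff {δ : Default P} {v : VA P → Bool} :
    Satisfies v (transDefault δ) ↔ ∀ a : ALabel P, a.default = δ → v (.inr a) = true →
      a.meaning.eval (v ∘ Sum.inl) = true := by
  constructor
  · rintro h (δ' | ⟨δ', i⟩ | δ') hδ ha <;> simp only [ALabel.default] at hδ <;> subst hδ
    · simpa [eval, avar, eval_emb, ha, ALabel.meaning] using h _ (Or.inl (Or.inl rfl))
    · rcases lt_or_ge i δ'.jus.length with hi | hi
      · simpa [eval, avar, eval_emb, ha, ALabel.meaning, hi] using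
          h _ (Or.inl (Or.inr ⟨⟨i, hi⟩, rfl⟩))
      · simp [ALabel.meaning, hi, eval]
    · simpa [eval, avar, eval_emb, ha, ALabel.meaning] using h _ (Or.inr rfl)
  · rintro h φ ((rfl | ⟨i, rfl⟩) | rfl) <;>
      simp only [eval, avar, Bool.or_eq_true, Bool.not_eq_true', eval_emb, or_iff_not_imp_left,
        Bool.not_eq_false]
    · simpa [ALabel.meaning, eval] using h (.pre δ) rfl
    · simpa [ALabel.meaning] using h (.jus δ i) rfl
    · exact h (.con δ) rfl

theorem satisfies_Xi_iff {S : Set (PropForm P)} {Δ : Finset (Default P)} {v : VA P → Bool} :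
    Satisfies v (Xi S Δ) ↔ Satisfies (v ∘ Sum.inl) S ∧
      ∀ a : ALabel P, a.default ∈ Δ → v (.inr a) = true → a.meaning.eval (v ∘ Sum.inl) = true := by
  simp only [Satisfies, Xi, Set.mem_union, or_imp, forall_and, Set.forall_mem_image, eval_emb,
    Set.mem_iUnion₂, forall_exists_index]
  refine and_congr_right' ⟨fun h a ha => ?_, fun h φ δ hδ hφ => ?_⟩
  · exact satisfies_transDefault_iff.mp (fun φ => h φ _ ha) a rfl
  · exact satisfies_transDefault_iff.mpr (fun a had => h a (had ▸ hδ)) φ hφ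

def IsPosAssumption (Δ : Finset (Default P)) (ℓ : ALit P) : Prop :=
  ℓ.sign = true ∧ ℓ.atom.default ∈ Δ

theorem satisfiable_Xi_union_iff {S : Set (PropForm P)} {Δ : Finset (Default P)}
    {α : Set (ALit P)} (hα : ∀ ℓ ∈ α, IsPosAssumption Δ ℓ) :
    Satisfiable (Xi S Δ ∪ litForms α) ↔ Satisfiable (S ∪ (fun ℓ => ℓ.atom.meaning) '' α) := by
  have form_eq : ∀ ℓ ∈ α, ℓ.form = avar ℓ.atom := fun ℓ hℓ => by simp [ALit.form, (hα ℓ hℓ).1]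
  constructor
  · rintro ⟨v, hv⟩
    obtain ⟨hS, hA⟩ := satisfies_Xi_iff.mp fun φ hφ => hv φ (.inl hφ)
    refine ⟨v ∘ Sum.inl, ?_⟩
    rintro _ (hφ | ⟨ℓ, hℓ, rfl⟩)
    · exact hS _ hφ
    · have hℓv := hv _ (.inr ⟨ℓ, hℓ, rfl⟩)
      rw [form_eq ℓ hℓ] at hℓv
      exact hA ℓ.atom (hα ℓ hℓ).2 hℓv
  · classical
    rintro ⟨w, hw⟩
    let v : VA P → Bool := Sum.elim w fun a => decide (⟨a, true⟩ ∈ α)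
    refine ⟨v, ?_⟩
    rintro _ (hφ | ⟨ℓ, hℓ, rfl⟩)
    · refine (satisfies_Xi_iff (v := v)).mpr ⟨fun φ hφ => hw φ (.inl hφ), fun a _ ha => ?_⟩ _ hφ
      exact hw _ (.inr ⟨⟨a, true⟩, of_decide_eq_true ha, rfl⟩)
    · obtain ⟨a, s⟩ := ℓ
      obtain rfl : s = true := (hα _ hℓ).1
      simpa [form_eq _ hℓ, avar, eval, v] using hℓ

def addCons (S : Set (PropForm P)) (D : Set (Default P)) : Set (PropForm P) :=
  S ∪ Default.con '' D

section Translation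

variable {S : Set (PropForm P)} {Δ : Finset (Default P)} {D : Set (Default P)}

theorem isPosAssumption_of_mem_conLit_image (hD : D ⊆ Δ) :
    ∀ ℓ ∈ conLit '' D, IsPosAssumption Δ ℓ := by
  rintro _ ⟨δ, hδ, rfl⟩
  exact ⟨rfl, hD hδ⟩

theorem meaning_image_conLit_image (D : Set (Default P)) :
    (fun ℓ : ALit P => ℓ.atom.meaning) '' (conLit '' D) = Default.con '' D := by
  rw [Set.image_image]
  rfl

theorem inI_conLit_image_iff (hD : D ⊆ Δ) :
    InI (Xi S Δ) (conLit '' D) ↔ falsum ∈ Th (addCons S D) := by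
  rw [InI, satisfiable_Xi_union_iff (isPosAssumption_of_mem_conLit_image hD),
    meaning_image_conLit_image, falsum_mem_Th_iff, addCons]

theorem inI_insert_conLit_image_iff {ℓ : ALit P} (hℓ : IsPosAssumption Δ ℓ) (hD : D ⊆ Δ) :
    InI (Xi S Δ) (insert ℓ (conLit '' D)) ↔
      ¬ Satisfiable (insert ℓ.atom.meaning (addCons S D)) := by
  rw [InI, satisfiable_Xi_union_iff
      (Set.forall_mem_insert.mpr ⟨hℓ, isPosAssumption_of_mem_conLit_image hD⟩),
    Set.image_insert_eq, meaning_image_conLit_image, Set.union_insert, addCons]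

theorem forall_not_inI_insert_jusLit_iff {δ : Default P} (hδ : δ ∈ Δ) (hD : D ⊆ Δ) :
    (∀ i : Fin δ.jus.length, ¬ InI (Xi S Δ) (insert (jusLit δ i) (conLit '' D))) ↔
      ∀ β ∈ δ.jus, neg β ∉ Th (addCons S D) := by
  rw [List.forall_mem_iff_get]
  refine forall_congr' fun i => ?_
  rw [inI_insert_conLit_image_iff ⟨rfl, hδ⟩ hD, neg_mem_Th_iff]
  simp [jusLit, ALabel.meaning]

theorem applicable_iff {δ : Default P} (hδ : δ ∈ Δ) (hD : D ⊆ Δ) :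
    Applicable (Xi S Δ) δ (conLit '' D) ↔
      δ.pre ∈ Th (addCons S D) ∧ ∀ β ∈ δ.jus, neg β ∉ Th (addCons S D) := by
  rw [Applicable, inI_insert_conLit_image_iff ⟨rfl, hδ⟩ hD, forall_not_inI_insert_jusLit_iff hδ hD,
    mem_Th_iff]
  rfl

end Translation

theorem conLit_injective : Function.Injective (conLit : Default P → ALit P) :=
  fun _ _ h => by simpa [conLit] using h

def cjPair (D : Set (Default P)) : Set (ALit P) × Set (ALit P) :=
  (conLit '' D, ⋃ δ ∈ D, jusLits δ)

theorem foldl_stepPair (L : List (Default P)) (p : Set (ALit P) × Set (ALit P)) :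
    L.foldl (fun p δ => stepPair δ p) p =
      (p.1 ∪ conLit '' {δ | δ ∈ L}, p.2 ∪ ⋃ δ ∈ L, jusLits δ) := by
  induction L generalizing p with
  | nil => simp
  | cons δ L ih =>
    rw [List.foldl_cons, ih, stepPair]
    ext ℓ <;> simp only [Set.mem_union, Set.mem_insert_iff, Set.mem_image, Set.mem_iUnion,
      List.mem_cons, Set.mem_ofPred_eq] <;> grind

theorem runList_eq_cjPair (L : List (Default P)) : runList L = cjPair {δ | δ ∈ L} := by
  simp [runList, foldl_stepPair, cjPair]

theorem validFrom_iff {Ξ : Set (PropForm (VA P))} (L : List (Default P))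
    (p : Set (ALit P) × Set (ALit P)) :
    ValidFrom Ξ p L ↔ ∀ M δ N, L = M ++ δ :: N →
      IsStruct Ξ (M.foldl (fun p δ => stepPair δ p) p).1
          (M.foldl (fun p δ => stepPair δ p) p).2 ∧
        Applicable Ξ δ (M.foldl (fun p δ => stepPair δ p) p).1 := by
  induction L generalizing p with
  | nil => simp [ValidFrom]
  | cons δ₀ L ih =>
    rw [ValidFrom, ih]
    constructor
    · rintro ⟨hs, ha, hrest⟩ M δ N hL
      rcases List.cons_eq_append_iff.mp hL with ⟨rfl, hδ⟩ | ⟨M', rfl, rfl⟩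
      · cases hδ
        exact ⟨hs, ha⟩
      · exact hrest M' δ N rfl
    · intro h
      exact ⟨(h [] δ₀ L rfl).1, (h [] δ₀ L rfl).2, fun M δ N hL => h (δ₀ :: M) δ N (hL ▸ rfl)⟩

theorem validFrom_empty_iff {Ξ : Set (PropForm (VA P))} {L : List (Default P)} :
    ValidFrom Ξ (∅, ∅) L ↔ ∀ M δ N, L = M ++ δ :: N →
      IsStruct Ξ (cjPair {x | x ∈ M}).1 (cjPair {x | x ∈ M}).2 ∧
        Applicable Ξ δ (cjPair {x | x ∈ M}).1 := by
  simp only [validFrom_iff, ← runList_eq_cjPair]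
  rfl

theorem isStruct_cjPair_iff {S : Set (PropForm P)} {Δ : Finset (Default P)} {D : Set (Default P)}
    (hD : D ⊆ Δ) :
    IsStruct (Xi S Δ) (cjPair D).1 (cjPair D).2 ↔
      falsum ∉ Th (addCons S D) ∧ ∀ δ ∈ D, ∀ β ∈ δ.jus, neg β ∉ Th (addCons S D) := by
  have hterm : IsTerm (conLit '' D) := by
    rintro a ⟨-, δ, -, h⟩
    simp [conLit] at h
  have hjus : (∀ ℓ ∈ (cjPair D).2, ¬ InI (Xi S Δ) (insert ℓ (conLit '' D))) ↔
      ∀ δ ∈ D, ∀ i : Fin δ.jus.length, ¬ InI (Xi S Δ) (insert (jusLit δ i) (conLit '' D)) := by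
    refine ⟨fun h δ hδ i => h _ (Set.mem_biUnion hδ ⟨i, rfl⟩), fun h ℓ hℓ => ?_⟩
    obtain ⟨δ, hδ, i, rfl⟩ : ∃ δ ∈ D, ∃ i : Fin δ.jus.length, ℓ = jusLit δ i := by
      simpa [cjPair, jusLits] using hℓ
    exact h δ hδ i
  change (IsTerm (conLit '' D) ∧ ¬ InI _ (conLit '' D) ∧
    ∀ ℓ ∈ (cjPair D).2, ¬ InI _ (insert ℓ (conLit '' D))) ↔ _
  rw [hjus, inI_conLit_image_iff hD, iff_true_intro hterm, true_and]
  exact and_congr_right' (forall₂_congr fun δ hδ => forall_not_inI_insert_jusLit_iff (hD hδ) hD)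

def generatingDefaults (Δ : Finset (Default P)) (E : Set (PropForm P)) : Set (Default P) :=
  {δ | δ ∈ Δ ∧ δ.pre ∈ E ∧ ∀ β ∈ δ.jus, neg β ∉ E}

def IsGrounded (S : Set (PropForm P)) (L : List (Default P)) : Prop :=
  ∀ M δ N, L = M ++ δ :: N → δ.pre ∈ Th (addCons S {x | x ∈ M})

theorem addCons_mono {S : Set (PropForm P)} {D D' : Set (Default P)} (h : D ⊆ D') :
    addCons S D ⊆ addCons S D' :=
  Set.union_subset_union_right S (Set.image_mono h)

theorem isStruct_cjPair_anti {S : Set (PropForm P)} {Δ : Finset (Default P)}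
    {D D' : Set (Default P)} (h : D ⊆ D') (hD' : D' ⊆ Δ)
    (hstruct : IsStruct (Xi S Δ) (cjPair D').1 (cjPair D').2) :
    IsStruct (Xi S Δ) (cjPair D).1 (cjPair D).2 := by
  have hTh := Th_mono (addCons_mono (S := S) h)
  rw [isStruct_cjPair_iff hD'] at hstruct
  rw [isStruct_cjPair_iff (h.trans hD')]
  exact ⟨fun hf => hstruct.1 (hTh hf), fun δ hδ β hβ hn => hstruct.2 δ (h hδ) β hβ (hTh hn)⟩

theorem genSeq_iff {S : Set (PropForm P)} {Δ : Finset (Default P)} {L : List (Default P)}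
    {α 𝒜 : Set (ALit P)} :
    GenSeq (Xi S Δ) Δ L α 𝒜 ↔ L.Nodup ∧ IsGrounded S L ∧
      {δ | δ ∈ L} = generatingDefaults Δ (Th (addCons S {δ | δ ∈ L})) ∧
      falsum ∉ Th (addCons S {δ | δ ∈ L}) ∧ cjPair {δ | δ ∈ L} = (α, 𝒜) := by
  set D : Set (Default P) := {δ | δ ∈ L}
  have prefix_subset : ∀ {M δ N}, L = M ++ δ :: N → {x | x ∈ M} ⊆ D :=
    fun hL x hx => by simp [D, hL, Set.mem_ofPred_eq.mp hx]
  rw [GenSeq, runList_eq_cjPair, validFrom_empty_iff]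
  constructor
  · rintro ⟨hnd, hΔ, hvalid, hrun, hstruct, hmax⟩
    obtain ⟨rfl, rfl⟩ := Prod.ext_iff.mp hrun
    have hDΔ : D ⊆ Δ := hΔ
    obtain ⟨hcons, hjus⟩ := (isStruct_cjPair_iff hDΔ).mp hstruct
    have hgr : IsGrounded S L := fun M δ N hL =>
      ((applicable_iff (hΔ δ (by simp [hL])) ((prefix_subset hL).trans hDΔ)).mp
        (hvalid M δ N hL).2).1
    refine ⟨hnd, hgr, Set.Subset.antisymm (fun δ hδ => ?_) (fun δ hδ => ?_), hcons, rfl⟩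
    · obtain ⟨M, N, hL⟩ := List.append_of_mem hδ
      exact ⟨hΔ δ hδ, Th_mono (addCons_mono (prefix_subset hL)) (hgr M δ N hL), hjus δ hδ⟩
    · exact hmax δ hδ.1 ((applicable_iff hδ.1 hDΔ).mpr hδ.2)
  · rintro ⟨hnd, hgr, hD, hcons, hrun⟩
    obtain ⟨rfl, rfl⟩ := Prod.ext_iff.mp hrun
    have hDΔ : D ⊆ Δ := fun δ hδ => (hD.subset hδ).1
    have hstruct : IsStruct (Xi S Δ) (cjPair D).1 (cjPair D).2 :=
      (isStruct_cjPair_iff hDΔ).mpr ⟨hcons, fun δ hδ => (hD.subset hδ).2.2⟩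
    refine ⟨hnd, hDΔ, fun M δ N hL => ⟨isStruct_cjPair_anti (prefix_subset hL) hDΔ hstruct, ?_⟩,
      rfl, hstruct, fun δ hδ happ => ?_⟩
    · have hδD := hD.subset (show δ ∈ D by simp [D, hL])
      refine (applicable_iff hδD.1 ((prefix_subset hL).trans hDΔ)).mpr ⟨hgr M δ N hL, ?_⟩
      exact fun β hβ hn => hδD.2.2 β hβ (Th_mono (addCons_mono (prefix_subset hL)) hn)
    · exact hD.superset ⟨hδ, (applicable_iff hδ hDΔ).mp happ⟩

/-- The sequence `E_j` in the definition of `E` being an extension. -/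
def stage (S : Set (PropForm P)) (Δ : Finset (Default P)) (E : Set (PropForm P)) :
    ℕ → Set (PropForm P)
  | 0 => S
  | j + 1 => Th (stage S Δ E j) ∪
      {γ | ∃ δ ∈ Δ, γ = δ.con ∧ δ.pre ∈ stage S Δ E j ∧ ∀ β ∈ δ.jus, neg β ∉ E}

section Stage

variable {S : Set (PropForm P)} {Δ : Finset (Default P)} {E : Set (PropForm P)}

theorem isExtension_iff_eq_iUnion_stage : IsExtension S Δ E ↔ E = ⋃ j, stage S Δ E j := by
  refine ⟨fun ⟨Es, h0, hsucc, hE⟩ => ?_, fun h => ⟨stage S Δ E, rfl, fun _ => rfl, h⟩⟩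
  have : Es = stage S Δ E := funext fun j => by
    induction j with
    | zero => exact h0
    | succ j ih => rw [hsucc, ih, stage]
  rwa [← this]

theorem Th_stage_subset (j : ℕ) : Th (stage S Δ E j) ⊆ stage S Δ E (j + 1) :=
  Set.subset_union_left

theorem stage_mono : Monotone (stage S Δ E) :=
  monotone_nat_of_le_succ fun j => (subset_Th _).trans (Th_stage_subset j)

theorem con_mem_stage_succ {δ : Default P} {j : ℕ} (hδ : δ ∈ Δ) (hpre : δ.pre ∈ stage S Δ E j)
    (hjus : ∀ β ∈ δ.jus, neg β ∉ E) : δ.con ∈ stage S Δ E (j + 1) :=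
  Or.inr ⟨δ, hδ, rfl, hpre, hjus⟩

theorem stage_subset (hS : S ⊆ E) (hE : Th E ⊆ E)
    (hcon : ∀ δ ∈ generatingDefaults Δ E, δ.con ∈ E) (j : ℕ) : stage S Δ E j ⊆ E := by
  induction j with
  | zero => exact hS
  | succ j ih =>
    rintro _ (hφ | ⟨δ, hδ, rfl, hpre, hjus⟩)
    · exact hE (Th_mono ih hφ)
    · exact hcon δ ⟨hδ, ih hpre, hjus⟩

theorem exists_addCons_subset_stage {L : List (Default P)} (hL : IsGrounded S L)
    (hLE : ∀ δ ∈ L, δ ∈ generatingDefaults Δ E) :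
    ∃ j, addCons S {δ | δ ∈ L} ⊆ stage S Δ E j := by
  suffices ∀ M N, L = M ++ N → ∃ j, addCons S {δ | δ ∈ M} ⊆ stage S Δ E j from
    this L [] (by simp)
  intro M
  induction M using List.reverseRecOn with
  | nil => exact fun _ _ => ⟨0, by simp [addCons, stage]⟩
  | append_singleton M δ ih =>
    intro N hMN
    have hL' : L = M ++ δ :: N := by simp [hMN]
    obtain ⟨j, hj⟩ := ih (δ :: N) hL'
    obtain ⟨hδ, -, hjus⟩ := hLE δ (by simp [hL'])
    have hpre : δ.pre ∈ stage S Δ E (j + 1) := Th_stage_subset j (Th_mono hj (hL M δ N hL'))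
    refine ⟨j + 2, ?_⟩
    rintro φ (hφ | ⟨δ', hδ', rfl⟩)
    · exact stage_mono (by omega) (hj (Or.inl hφ))
    · rcases List.mem_append.mp hδ' with hδ' | hδ'
      · exact stage_mono (by omega) (hj (Or.inr ⟨δ', hδ', rfl⟩))
      · obtain rfl := List.mem_singleton.mp hδ'
        exact con_mem_stage_succ hδ hpre hjus

/-- Junk value `0` when `φ` occurs in no stage. -/
noncomputable def firstStage (S : Set (PropForm P)) (Δ : Finset (Default P))
    (E : Set (PropForm P)) (φ : PropForm P) : ℕ :=
  sInf {j | φ ∈ stage S Δ E j}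

theorem stage_subset_Th_addCons (hE : ∀ j, stage S Δ E j ⊆ E) (j : ℕ) :
    stage S Δ E j ⊆
      Th (addCons S {δ ∈ generatingDefaults Δ E | firstStage S Δ E δ.pre < j}) := by
  induction j with
  | zero => exact Set.subset_union_left.trans (subset_Th _)
  | succ j ih =>
    rintro _ (hφ | ⟨δ, hδ, rfl, hpre, hjus⟩)
    · refine Th_subset_Th_of_subset_Th (ih.trans (Th_mono (addCons_mono ?_))) hφ
      exact fun δ hδ => ⟨hδ.1, Nat.lt_succ_of_lt hδ.2⟩
    · have hrank : firstStage S Δ E δ.pre < j + 1 := Nat.lt_succ_of_le (Nat.sInf_le hpre)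
      exact subset_Th _ (Or.inr ⟨δ, ⟨⟨hδ, hE j hpre, hjus⟩, hrank⟩, rfl⟩)

end Stage

theorem Finset.exists_nodup_pairwise_le_comp {α β : Type*} [LinearOrder β] (s : Finset α)
    (f : α → β) :
    ∃ L : List α, L.Nodup ∧ (∀ x, x ∈ L ↔ x ∈ s) ∧ L.Pairwise (fun a b => f a ≤ f b) := by
  let le : α → α → Bool := fun a b => decide (f a ≤ f b)
  have hperm := List.mergeSort_perm s.toList le
  refine ⟨s.toList.mergeSort le, hperm.nodup_iff.mpr s.nodup_toList,
    fun x => hperm.mem_iff.trans Finset.mem_toList, ?_⟩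
  refine (List.pairwise_mergeSort (le := le) (fun a b c hab hbc => ?_) (fun a b => ?_) _).imp
    (by simp [le])
  · simp only [le, decide_eq_true_eq] at hab hbc ⊢
    exact hab.trans hbc
  · simpa [le] using le_total (f a) (f b)

theorem List.mem_left_of_pairwise_of_lt {α β : Type*} [Preorder β] {f : α → β} {M N : List α}
    {a x : α} (h : (M ++ a :: N).Pairwise (fun a b => f a ≤ f b)) (hx : x ∈ M ++ a :: N)
    (hlt : f x < f a) : x ∈ M := by
  simp only [List.pairwise_append, List.pairwise_cons] at h
  rcases List.mem_append.mp hx with hx | hx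
  · exact hx
  rcases List.mem_cons.mp hx with rfl | hx
  · exact absurd hlt (lt_irrefl _)
  · exact absurd (h.2.1.1 x hx) (not_le_of_gt hlt)

section Extension

variable {S : Set (PropForm P)} {Δ : Finset (Default P)} {E : Set (PropForm P)}

theorem IsExtension.exists_isGrounded (h : IsExtension S Δ E) :
    ∃ L, L.Nodup ∧ {δ | δ ∈ L} = generatingDefaults Δ E ∧ IsGrounded S L := by
  classical
  have hE := isExtension_iff_eq_iUnion_stage.mp h
  have hsub : ∀ j, stage S Δ E j ⊆ E := fun j => (Set.subset_iUnion _ j).trans hE.symm.subset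
  -- list the generating defaults in the order in which their prerequisites are derived
  obtain ⟨L, hnd, hmem, hsorted⟩ :=
    (Δ.filter (· ∈ generatingDefaults Δ E)).exists_nodup_pairwise_le_comp
      fun δ => firstStage S Δ E δ.pre
  have hLD : {δ | δ ∈ L} = generatingDefaults Δ E := by
    ext δ
    simpa [hmem] using fun hδ => hδ.1
  refine ⟨L, hnd, hLD, fun M δ N hL => ?_⟩
  have hδ : δ ∈ generatingDefaults Δ E := hLD.subset (show δ ∈ L by simp [hL])
  have hpre : δ.pre ∈ stage S Δ E (firstStage S Δ E δ.pre) :=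
    Nat.sInf_mem (Set.mem_iUnion.mp (hE.subset hδ.2.1))
  refine Th_mono (addCons_mono fun δ' hδ' => ?_) (stage_subset_Th_addCons hsub _ hpre)
  exact List.mem_left_of_pairwise_of_lt (hL ▸ hsorted) (hL ▸ hLD.superset hδ'.1) hδ'.2

theorem IsExtension.eq_Th_addCons (h : IsExtension S Δ E) :
    E = Th (addCons S (generatingDefaults Δ E)) := by
  have hE := isExtension_iff_eq_iUnion_stage.mp h
  have hsub : ∀ j, stage S Δ E j ⊆ E := fun j => (Set.subset_iUnion _ j).trans hE.symm.subset
  refine Set.Subset.antisymm (hE.subset.trans (Set.iUnion_subset fun j => ?_)) ?_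
  · exact (stage_subset_Th_addCons hsub j).trans (Th_mono (addCons_mono fun δ hδ => hδ.1))
  · obtain ⟨L, -, hLD, hgr⟩ := h.exists_isGrounded
    obtain ⟨j, hj⟩ := exists_addCons_subset_stage hgr fun δ hδ => hLD.subset hδ
    rw [hLD] at hj
    exact (Th_mono hj).trans ((Th_stage_subset j).trans (hsub _))

theorem isExtension_of_isGrounded {L : List (Default P)}
    (hE : E = Th (addCons S (generatingDefaults Δ E))) (hgr : IsGrounded S L)
    (hLD : {δ | δ ∈ L} = generatingDefaults Δ E) : IsExtension S Δ E := by
  rw [isExtension_iff_eq_iUnion_stage]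
  refine Set.Subset.antisymm ?_ (Set.iUnion_subset (stage_subset ?_ ?_ fun δ hδ => ?_))
  · obtain ⟨j, hj⟩ := exists_addCons_subset_stage hgr fun δ hδ => hLD.subset hδ
    rw [hLD] at hj
    exact hE.subset.trans ((Th_mono hj).trans ((Th_stage_subset j).trans
      (Set.subset_iUnion _ _)))
  · rw [hE]
    exact Set.subset_union_left.trans (subset_Th _)
  · rw [hE, Th_Th]
  · rw [hE]
    exact subset_Th _ (Or.inr ⟨δ, hδ, rfl⟩)

end Extension

def IsGeneratingSet (S : Set (PropForm P)) (Δ : Finset (Default P)) (D : Set (Default P)) :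
    Prop :=
  D = generatingDefaults Δ (Th (addCons S D)) ∧ falsum ∉ Th (addCons S D) ∧
    ∃ L, L.Nodup ∧ {δ | δ ∈ L} = D ∧ IsGrounded S L

section GeneratingSet

variable {S : Set (PropForm P)} {Δ : Finset (Default P)}

theorem setOf_accessible_eq_image :
    {p | Accessible (Xi S Δ) Δ p.1 p.2} = cjPair '' {D | IsGeneratingSet S Δ D} := by
  ext ⟨α, 𝒜⟩
  constructor
  · rintro ⟨L, hL⟩
    obtain ⟨hnd, hgr, hD, hcons, hrun⟩ := genSeq_iff.mp hL
    exact ⟨_, ⟨hD, hcons, L, hnd, rfl, hgr⟩, hrun⟩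
  · rintro ⟨D, ⟨hD, hcons, L, hnd, rfl, hgr⟩, hrun⟩
    exact ⟨L, genSeq_iff.mpr ⟨hnd, hgr, hD, hcons, hrun⟩⟩

theorem setOf_consistent_extension_eq_image :
    {E | IsExtension S Δ E ∧ falsum ∉ E} =
      (fun D => Th (addCons S D)) '' {D | IsGeneratingSet S Δ D} := by
  ext E
  constructor
  · rintro ⟨h, hcons⟩
    have hE := h.eq_Th_addCons
    refine ⟨generatingDefaults Δ E, ⟨by rw [← hE], by rwa [← hE], ?_⟩, hE.symm⟩
    exact h.exists_isGrounded
  · rintro ⟨D, ⟨hD, hcons, L, -, hLD, hgr⟩, rfl⟩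
    exact ⟨isExtension_of_isGrounded (by rw [← hD]) hgr (hLD.trans hD), hcons⟩

theorem injective_cjPair : Function.Injective (cjPair : Set (Default P) → _) := fun _ _ h =>
  (Set.image_injective.mpr conLit_injective) (congrArg Prod.fst h)

theorem injOn_Th_addCons : Set.InjOn (fun D => Th (addCons S D)) {D | IsGeneratingSet S Δ D} :=
  fun D hD D' hD' h => calc
    D = generatingDefaults Δ (Th (addCons S D)) := hD.1
    _ = generatingDefaults Δ (Th (addCons S D')) := congrArg _ h
    _ = D' := hD'.1.symm

end GeneratingSet

/-- Theorem 5.2.  For a finite default theory `⟨S, Δ⟩` with associated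
argumentation system `⟨Ξ, A⟩`, there is a bijection between the accessible structures of
`⟨Ξ, A⟩` and the consistent extensions of `⟨S, Δ⟩`. -/
theorem accessible_structures_equiv_consistent_extensions
    {P : Type} (S : Finset (PropForm P)) (Δ : Finset (Default P)) :
    Nonempty
      ({p : Set (ALit P) × Set (ALit P) // Accessible (Xi (↑S) Δ) Δ p.1 p.2} ≃
       {E : Set (PropForm P) // IsExtension (↑S) Δ E ∧ PropForm.falsum ∉ E}) := by
  have hacc := (injective_cjPair.injOn (s := {D | IsGeneratingSet (↑S) Δ D})).bijOn_image
  have hext := (injOn_Th_addCons (S := ↑S) (Δ := Δ)).bijOn_image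
  rw [← setOf_accessible_eq_image] at hacc
  rw [← setOf_consistent_extension_eq_image] at hext
  exact ⟨(hacc.equiv _).symm.trans (hext.equiv _)⟩
end

section
/- Let ⟨Σ,Δ⟩ be a finite default theory and ⟨Ξ,A⟩ its associated argumentation system. If ⟨a₁,…,a_q⟩ and ⟨a′₁,…,a′_{q′}⟩ are two generating sequences of the same accessible structure ⟨α,𝒜⟩, then they contain exactly the same default assumptions; in particular q = q′ and one sequence is a permutation of the other. -/
/-- Two generating sequences of the same accessible structure `⟨α, 𝒜⟩`
contain exactly the same default assumptions; in particular they have the same length and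
one is a permutation of the other. -/
theorem generating_sequences_perm
    {P : Type} (S : Finset (PropForm P)) (Δ : Finset (Default P))
    (L₁ L₂ : List (Default P)) (α 𝒜 : Set (ALit P))
    (h₁ : GenSeq (Xi (↑S) Δ) Δ L₁ α 𝒜) (h₂ : GenSeq (Xi (↑S) Δ) Δ L₂ α 𝒜) :
    (∀ δ : Default P, δ ∈ L₁ ↔ δ ∈ L₂) ∧ L₁.length = L₂.length ∧ L₁.Perm L₂ := by
  have key : ∀ (L : List (Default P)) (p : Set (ALit P) × Set (ALit P)),
      (L.foldl (fun p δ => stepPair δ p) p).1 = {ℓ | ∃ δ ∈ L, ℓ = conLit δ} ∪ p.1 := by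
    intro L
    induction L with
    | nil => intro p; simp
    | cons δ L ih =>
      intro p
      rw [List.foldl_cons, ih]
      ext ℓ
      simp only [stepPair, Set.mem_union, Set.mem_insert_iff, Set.mem_setOf_eq, List.mem_cons]
      constructor
      · rintro (⟨d, hd, rfl⟩ | (rfl | h))
        · exact Or.inl ⟨d, Or.inr hd, rfl⟩
        · exact Or.inl ⟨δ, Or.inl rfl, rfl⟩
        · exact Or.inr h
      · rintro (⟨d, (rfl | hd), rfl⟩ | h)
        · exact Or.inr (Or.inl rfl)
        · exact Or.inl ⟨d, hd, rfl⟩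
        · exact Or.inr (Or.inr h)
  have hconinj : Function.Injective (conLit (P := P)) := by
    intro a b hab
    simpa [conLit, ALit.mk.injEq, ALabel.con.injEq] using hab
  have hmem : ∀ δ : Default P, δ ∈ L₁ ↔ δ ∈ L₂ := by
    intro δ
    have e1 : α = {ℓ | ∃ d ∈ L₁, ℓ = conLit d} := by
      have := key L₁ (∅, ∅)
      rw [show L₁.foldl (fun p δ => stepPair δ p) (∅, ∅) = runList L₁ from rfl,
        h₁.2.2.2.1] at this
      simpa using this
    have e2 : α = {ℓ | ∃ d ∈ L₂, ℓ = conLit d} := by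
      have := key L₂ (∅, ∅)
      rw [show L₂.foldl (fun p δ => stepPair δ p) (∅, ∅) = runList L₂ from rfl,
        h₂.2.2.2.1] at this
      simpa using this
    constructor
    · intro h
      have : conLit δ ∈ α := e1 ▸ ⟨δ, h, rfl⟩
      rw [e2] at this
      obtain ⟨d, hd, hde⟩ := this
      rw [hconinj hde]; exact hd
    · intro h
      have : conLit δ ∈ α := e2 ▸ ⟨δ, h, rfl⟩
      rw [e1] at this
      obtain ⟨d, hd, hde⟩ := this
      rw [hconinj hde]; exact hd
  have hperm : L₁.Perm L₂ := (List.perm_ext_iff_of_nodup h₁.1 h₂.1).2 hmem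
  exact ⟨hmem, hperm.length_eq, hperm⟩
end
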